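/- Let T_init and T_final be triangulations of the same convex polygon sharing a diagonal e. Then every flip sequence of minimum length transforming T_init into T_final contains no flip whose underlying (removed) diagonal is e; consequently e is a diagonal of every intermediate triangulation along every shortest path from T_init to T_final. -/

import Mathlib

open Finset

/-- Two vertices of the convex `m`-gon are adjacent in the cyclic order. -/
def PolyAdj (m : ℕ) (a b : Fin m) : Prop :=
  (a.val + 1) % m = b.val ∨ (b.val + 1) % m = a.val

/-- `e` is a diagonal of the convex `m`-gon: an unordered pair of distinct,
non-adjacent vertices. -/
def IsDiagonal (m : ℕ) (e : Finset (Fin m)) : Prop :=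
  ∃ a b : Fin m, a ≠ b ∧ ¬ PolyAdj m a b ∧ e = {a, b}

/-- The cyclic distance from `a` to `x`, going forwards in the cyclic order. -/
def cycDist (m : ℕ) (a x : Fin m) : ℕ := (x.val + m - a.val) % m

/-- `x` lies strictly between `a` and `b` in the cyclic order. -/
def CycBtw (m : ℕ) (a x b : Fin m) : Prop :=
  0 < cycDist m a x ∧ cycDist m a x < cycDist m a b

/-- Two chords cross: their endpoints strictly interleave in the cyclic order. -/
def Cross (m : ℕ) (e₁ e₂ : Finset (Fin m)) : Prop :=
  ∃ a b c d : Fin m, e₁ = {a, b} ∧ e₂ = {c, d} ∧ CycBtw m a c b ∧ CycBtw m b d a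

/-- A triangulation of the convex `m`-gon: a maximal set of pairwise
non-crossing diagonals. -/
structure Triangulation (m : ℕ) where
  diagonals : Finset (Finset (Fin m))
  isDiagonal : ∀ e ∈ diagonals, IsDiagonal m e
  noncross : ∀ e₁ ∈ diagonals, ∀ e₂ ∈ diagonals, ¬ Cross m e₁ e₂
  maximal : ∀ e, IsDiagonal m e → (∀ e' ∈ diagonals, ¬ Cross m e e') → e ∈ diagonals

/-- `e` is a side in the triangulation `T`: either an edge of the polygon
(between cyclically adjacent vertices) or a diagonal of `T`. -/
def IsSide (m : ℕ) (T : Triangulation m) (e : Finset (Fin m)) : Prop :=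
  (∃ a b : Fin m, PolyAdj m a b ∧ e = {a, b}) ∨ e ∈ T.diagonals

/-- `t` is a triangle of the triangulation `T`: three distinct vertices each
pair of which forms a side of `T`. -/
def IsTriangle (m : ℕ) (T : Triangulation m) (t : Finset (Fin m)) : Prop :=
  ∃ a b c : Fin m, a ≠ b ∧ a ≠ c ∧ b ≠ c ∧ t = {a, b, c} ∧
    IsSide m T {a, b} ∧ IsSide m T {a, c} ∧ IsSide m T {b, c}

/-- Two diagonals of `T` are neighbors if they both belong to `T` and lie on a
common triangle of `T`; they are independent otherwise. -/
def Neighbor (m : ℕ) (T : Triangulation m) (e₁ e₂ : Finset (Fin m)) : Prop :=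
  e₁ ∈ T.diagonals ∧ e₂ ∈ T.diagonals ∧
    ∃ t, IsTriangle m T t ∧ e₁ ⊆ t ∧ e₂ ⊆ t

/-- `T'` is obtained from `T` by flipping the diagonal `e`, which removes `e`
and creates the new diagonal `e'` (necessarily the opposite diagonal of the
quadrilateral formed by the two triangles of `T` containing `e`, since `T'` is
again a triangulation). -/
def IsFlip (m : ℕ) (T T' : Triangulation m) (e e' : Finset (Fin m)) : Prop :=
  e ∈ T.diagonals ∧ e' ∉ T.diagonals ∧
    T'.diagonals = insert e' (T.diagonals.erase e)

/-- `Ts 0, Ts 1, …, Ts r` is a sequence of triangulations in which `Ts (i+1)`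
is obtained from `Ts i` by performing the flip `F i`, which removes the
diagonal `(F i).1` and creates the diagonal `(F i).2`. -/
def IsFlipSeq (m r : ℕ) (F : ℕ → Finset (Fin m) × Finset (Fin m))
    (Ts : ℕ → Triangulation m) : Prop :=
  ∀ i < r, IsFlip m (Ts i) (Ts (i + 1)) (F i).1 (F i).2

/-- The flip distance between two triangulations: the minimum length of a flip
sequence transforming one into the other. -/
noncomputable def FlipDist (m : ℕ) (T T' : Triangulation m) : ℕ :=
  sInf {r | ∃ F Ts, IsFlipSeq m r F Ts ∧ Ts 0 = T ∧ Ts r = T'}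

/-- `e` is a free-diagonal of `T` with respect to `Tfinal`: flipping `e` in `T`
creates a diagonal belonging to `Tfinal`. -/
def FreeDiagonal (m : ℕ) (T Tfinal : Triangulation m) (e : Finset (Fin m)) : Prop :=
  ∃ T' e', IsFlip m T T' e e' ∧ e' ∈ Tfinal.diagonals

/-- Arc of the DAG `D_F` associated to the flip sequence `F` with triangulation
sequence `Ts`: there is an arc from flip `i` to flip `j` when `i < j` and the
diagonal created by flip `i` is a neighbor of the diagonal removed by flip `j`
in the triangulation `Ts j` in which flip `j` is performed. -/
def Arc (m r : ℕ) (F : ℕ → Finset (Fin m) × Finset (Fin m))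
    (Ts : ℕ → Triangulation m) (i j : ℕ) : Prop :=
  i < j ∧ j < r ∧ Neighbor m (Ts j) (F i).2 (F j).1

/-!
Projection argument. For the shared diagonal `e = {a, b}`, send every triangulation `T` to the
triangulation made of `e`, the diagonals of `T` not crossing `e`, and a fan at `a` in place of the
diagonals crossing `e`. This projection fixes the triangulations containing `e`, turns every flip
into a flip or into no move at all, and turns a flip of `e` itself into no move. So a flip sequence
from `Tinit` to `Tfinal` that flips `e` projects to a strictly shorter one, and a shortest sequence
never flips `e`; hence `e` survives in every intermediate triangulation.
-/
theorem Finset.pair_eq_pair_iff {α : Type*} [DecidableEq α] {a b c d : α} :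
    ({a, b} : Finset α) = {c, d} ↔ a = c ∧ b = d ∨ a = d ∧ b = c := by
  constructor
  · intro h
    have ha : a ∈ ({c, d} : Finset α) := h ▸ by simp
    have hb : b ∈ ({c, d} : Finset α) := h ▸ by simp
    have hc : c ∈ ({a, b} : Finset α) := h.symm ▸ by simp
    have hd : d ∈ ({a, b} : Finset α) := h.symm ▸ by simp
    simp only [Finset.mem_insert, Finset.mem_singleton] at ha hb hc hd
    tauto
  · rintro (⟨rfl, rfl⟩ | ⟨rfl, rfl⟩)
    · rfl
    · exact Finset.pair_comm _ _

section Coordinates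

variable {m : ℕ}

theorem cycDist_eq_ite (o x : Fin m) :
    cycDist m o x = if o.val ≤ x.val then x.val - o.val else x.val + m - o.val := by
  have := x.isLt
  unfold cycDist
  split_ifs with h
  · rw [show x.val + m - o.val = x.val - o.val + m by omega, Nat.add_mod_right,
      Nat.mod_eq_of_lt (by omega)]
  · exact Nat.mod_eq_of_lt (by omega)

theorem cycDist_lt (o x : Fin m) : cycDist m o x < m := Nat.mod_lt _ o.pos

@[simp]
theorem cycDist_self (o : Fin m) : cycDist m o o = 0 := by
  simp [cycDist_eq_ite]

theorem cycDist_injective (o : Fin m) : Function.Injective (cycDist m o) := by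
  intro x y h
  have := x.isLt; have := y.isLt
  rw [cycDist_eq_ite, cycDist_eq_ite] at h
  ext
  split_ifs at h <;> omega

theorem cycDist_inj {o x y : Fin m} : cycDist m o x = cycDist m o y ↔ x = y :=
  (cycDist_injective o).eq_iff

theorem cycDist_eq_zero {o x : Fin m} : cycDist m o x = 0 ↔ x = o := by
  rw [← cycDist_self o, cycDist_inj]

theorem cycDist_pos {o x : Fin m} : 0 < cycDist m o x ↔ x ≠ o := by
  rw [Nat.pos_iff_ne_zero, ne_eq, cycDist_eq_zero]

theorem exists_cycDist_eq (o : Fin m) {k : ℕ} (hk : k < m) : ∃ x, cycDist m o x = k := by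
  have hsurj : Function.Surjective (fun x : Fin m => (⟨cycDist m o x, cycDist_lt o x⟩ : Fin m)) :=
    Finite.injective_iff_surjective.1 fun x y h => cycDist_injective o (Fin.mk.inj_iff.1 h)
  obtain ⟨x, hx⟩ := hsurj ⟨k, hk⟩
  exact ⟨x, Fin.mk.inj_iff.1 hx⟩

theorem cycDist_rebase (o a x : Fin m) :
    cycDist m a x = if cycDist m o a ≤ cycDist m o x then cycDist m o x - cycDist m o a
      else cycDist m o x + m - cycDist m o a := by
  have := x.isLt; have := a.isLt; have := o.isLt
  simp only [cycDist_eq_ite]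
  split_ifs <;> omega

theorem cycBtw_iff (o a x b : Fin m) :
    CycBtw m a x b ↔
      cycDist m o a < cycDist m o x ∧ cycDist m o x < cycDist m o b ∨
      cycDist m o b < cycDist m o a ∧ cycDist m o a < cycDist m o x ∨
      cycDist m o x < cycDist m o b ∧ cycDist m o b < cycDist m o a := by
  have := cycDist_lt o x; have := cycDist_lt o a; have := cycDist_lt o b
  unfold CycBtw
  rw [cycDist_rebase o a x, cycDist_rebase o a b]
  split_ifs <;> omega

theorem polyAdj_iff (x y : Fin m) :
    PolyAdj m x y ↔ cycDist m x y = 1 ∨ cycDist m x y = m - 1 := by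
  have := x.isLt; have := y.isLt
  have hsucc : ∀ z : Fin m, (z.val + 1) % m = if z.val + 1 = m then 0 else z.val + 1 := by
    intro z
    split_ifs with h
    · rw [h, Nat.mod_self]
    · exact Nat.mod_eq_of_lt (by omega)
  unfold PolyAdj
  rw [hsucc, hsucc, cycDist_eq_ite]
  split_ifs <;> omega

def Interleave (x y c d : ℕ) : Prop :=
  x < c ∧ c < y ∧ y < d ∨ c < x ∧ x < d ∧ d < y

/-- Cutting the polygon open at `o` turns crossing of chords into interleaving on a line. -/
theorem cross_pair_iff (o : Fin m) {x y c d : Fin m} (hxy : cycDist m o x < cycDist m o y)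
    (hcd : cycDist m o c < cycDist m o d) :
    Cross m {x, y} {c, d} ↔
      Interleave (cycDist m o x) (cycDist m o y) (cycDist m o c) (cycDist m o d) := by
  unfold Interleave
  constructor
  · rintro ⟨x', y', c', d', hxy', hcd', hc, hd⟩
    rw [cycBtw_iff o] at hc hd
    rcases Finset.pair_eq_pair_iff.1 hxy' with ⟨rfl, rfl⟩ | ⟨rfl, rfl⟩ <;>
      rcases Finset.pair_eq_pair_iff.1 hcd' with ⟨rfl, rfl⟩ | ⟨rfl, rfl⟩ <;> omega
  · simp only [Cross, cycBtw_iff o]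
    rintro (h | h)
    · exact ⟨x, y, c, d, rfl, rfl, by omega, by omega⟩
    · exact ⟨x, y, d, c, rfl, Finset.pair_comm _ _, by omega, by omega⟩

theorem Cross.exists_eq_pair_lt {e₁ e₂ : Finset (Fin m)} (h : Cross m e₁ e₂) (o : Fin m) :
    ∃ x y, e₁ = {x, y} ∧ cycDist m o x < cycDist m o y := by
  obtain ⟨x, y, c, d, rfl, -, hc, -⟩ := h
  have hxy : x ≠ y := by rintro rfl; simp [CycBtw] at hc
  rcases lt_or_gt_of_ne (mt cycDist_inj.1 hxy : cycDist m o x ≠ cycDist m o y) with h | h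
  · exact ⟨x, y, rfl, h⟩
  · exact ⟨y, x, Finset.pair_comm _ _, h⟩

theorem Cross.symm {e₁ e₂ : Finset (Fin m)} (h : Cross m e₁ e₂) : Cross m e₂ e₁ := by
  obtain ⟨a, b, c, d, rfl, rfl, hc, hd⟩ := h
  have := cycDist_lt a b; have := cycDist_lt a c; have := cycDist_lt a d
  refine ⟨d, c, a, b, Finset.pair_comm _ _, rfl, ?_, ?_⟩ <;>
    rw [cycBtw_iff a] at hc hd ⊢ <;> simp only [cycDist_self] at hc hd ⊢ <;> omega

theorem not_cross_of_mem {e₁ e₂ : Finset (Fin m)} {v : Fin m} (h₁ : v ∈ e₁) (h₂ : v ∈ e₂) :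
    ¬ Cross m e₁ e₂ := by
  rintro ⟨x, y, c, d, rfl, rfl, hc, hd⟩
  simp only [Finset.mem_insert, Finset.mem_singleton] at h₁ h₂
  rw [cycBtw_iff x] at hc hd
  rcases h₁ with rfl | rfl <;> rcases h₂ with rfl | rfl <;> omega

theorem not_cross_of_polyAdj {x y : Fin m} (h : PolyAdj m x y) (k : Finset (Fin m)) :
    ¬ Cross m k {x, y} := by
  intro hk
  obtain ⟨c, d, rfl, hcd⟩ := hk.exists_eq_pair_lt x
  obtain ⟨u, v, huv, hlt⟩ := hk.symm.exists_eq_pair_lt x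
  rw [polyAdj_iff] at h
  have := cycDist_lt x c; have := cycDist_lt x d
  rw [huv, cross_pair_iff x hcd hlt] at hk
  unfold Interleave at hk
  rcases Finset.pair_eq_pair_iff.1 huv with ⟨rfl, rfl⟩ | ⟨rfl, rfl⟩ <;>
    simp only [cycDist_self] at hk hlt <;> omega

theorem not_cross_pair_self (k : Finset (Fin m)) (x : Fin m) : ¬ Cross m k {x, x} := by
  intro h
  obtain ⟨u, v, huv, hlt⟩ := h.symm.exists_eq_pair_lt x
  rcases Finset.pair_eq_pair_iff.1 huv with ⟨rfl, rfl⟩ | ⟨rfl, rfl⟩ <;> exact lt_irrefl _ hlt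

theorem isDiagonal_pair_iff {x y : Fin m} : IsDiagonal m {x, y} ↔ x ≠ y ∧ ¬ PolyAdj m x y := by
  constructor
  · rintro ⟨x', y', hne, hadj, h⟩
    rcases Finset.pair_eq_pair_iff.1 h with ⟨rfl, rfl⟩ | ⟨rfl, rfl⟩
    · exact ⟨hne, hadj⟩
    · exact ⟨hne.symm, fun h => hadj (Or.symm h)⟩
  · rintro ⟨hne, hadj⟩
    exact ⟨x, y, hne, hadj, rfl⟩

end Coordinates

section Triangulations

variable {m : ℕ}

theorem Triangulation.ext {T T' : Triangulation m} (h : T.diagonals = T'.diagonals) : T = T' := by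
  cases T; cases T'; cases h; rfl

theorem Triangulation.eq_of_subset {T T' : Triangulation m}
    (h : T.diagonals ⊆ T'.diagonals) : T = T' :=
  Triangulation.ext <| Finset.Subset.antisymm h fun g hg =>
    T.maximal g (T'.isDiagonal g hg) fun k hk => T'.noncross g hg k (h hk)

theorem IsSide.not_cross {T : Triangulation m} {s k : Finset (Fin m)} (hs : IsSide m T s)
    (hk : k ∈ T.diagonals) : ¬ Cross m k s := by
  rcases hs with ⟨x, y, hxy, rfl⟩ | hs
  · exact not_cross_of_polyAdj hxy k
  · exact T.noncross k hk s hs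

/-- The far-most vertex `p` with `{x, p}` a side closes a triangle of `T` on the diagonal `{x, y}`. -/
theorem Triangulation.exists_apex (T : Triangulation m) {x y : Fin m}
    (h : {x, y} ∈ T.diagonals) :
    ∃ p, CycBtw m x p y ∧ IsSide m T {x, p} ∧ IsSide m T {p, y} := by
  classical
  obtain ⟨hne, hadj⟩ := isDiagonal_pair_iff.1 (T.isDiagonal _ h)
  rw [polyAdj_iff] at hadj
  have hy := cycDist_lt x y
  have hy0 : cycDist m x y ≠ 0 := fun h => hne (cycDist_eq_zero.1 h).symm
  obtain ⟨p₀, hp₀⟩ := exists_cycDist_eq x (k := 1) (by omega)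
  set S := Finset.univ.filter fun p => CycBtw m x p y ∧ IsSide m T {x, p}
  have hp₀S : p₀ ∈ S := Finset.mem_filter.2 ⟨Finset.mem_univ _,
    ⟨by rw [hp₀]; omega, by omega⟩, Or.inl ⟨x, p₀, (polyAdj_iff x p₀).2 (Or.inl hp₀), rfl⟩⟩
  obtain ⟨p, hpS, hpmax⟩ := S.exists_max_image (cycDist m x) ⟨p₀, hp₀S⟩
  simp only [S, Finset.mem_filter, Finset.mem_univ, true_and] at hpS hpmax
  obtain ⟨hpxy, hxp⟩ := hpS
  refine ⟨p, hpxy, hxp, ?_⟩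
  by_cases hpy : PolyAdj m p y
  · exact Or.inl ⟨p, y, hpy, rfl⟩
  have hpy' : p ≠ y := by rintro rfl; exact absurd hpxy.2 (lt_irrefl _)
  refine Or.inr (T.maximal _ (isDiagonal_pair_iff.2 ⟨hpy', hpy⟩) fun k hk hcross => ?_)
  obtain ⟨u, v, rfl, huv⟩ := hcross.symm.exists_eq_pair_lt x
  have hxy := T.noncross _ hk _ h
  have hxp := hxp.not_cross hk
  unfold CycBtw at hpxy
  have hx := cycDist_self x
  rw [cross_pair_iff x hpxy.2 huv] at hcross
  rw [cross_pair_iff x huv (by omega)] at hxy hxp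
  unfold Interleave at hcross hxy hxp
  -- `{u, v}` must run from `x` to a vertex `v` beyond `p`, contradicting the choice of `p`
  have hu : u = x := cycDist_eq_zero.1 (by omega)
  rw [hu] at hk
  have := hpmax v ⟨⟨by omega, by omega⟩, Or.inr hk⟩
  omega

def quadSides (x p y q : Fin m) : Finset (Finset (Fin m)) := {{x, p}, {p, y}, {y, q}, {q, x}}

theorem Triangulation.exists_quad (T : Triangulation m) {p q : Fin m}
    (h : {p, q} ∈ T.diagonals) :
    ∃ x y, CycBtw m q x p ∧ CycBtw m p y q ∧ ∀ s ∈ quadSides x p y q, IsSide m T s := by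
  obtain ⟨y, hy, hpy, hyq⟩ := T.exists_apex h
  obtain ⟨x, hx, hqx, hxp⟩ := T.exists_apex (Finset.pair_comm p q ▸ h)
  refine ⟨x, y, hx, hy, ?_⟩
  simp only [quadSides, Finset.mem_insert, Finset.mem_singleton]
  rintro s (rfl | rfl | rfl | rfl) <;> assumption

theorem quadSides_ne {x p y q : Fin m} (hx : CycBtw m q x p) (hy : CycBtw m p y q)
    {s : Finset (Fin m)} (hs : s ∈ quadSides x p y q) : s ≠ {p, q} := by
  rw [cycBtw_iff p] at hx hy
  have := cycDist_self p
  simp only [quadSides, Finset.mem_insert, Finset.mem_singleton] at hs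
  rcases hs with rfl | rfl | rfl | rfl <;>
    simp only [ne_eq, Finset.pair_eq_pair_iff, ← cycDist_inj (o := p)] <;> omega

theorem exists_cross_quadSides {x p y q : Fin m} (hx : CycBtw m q x p) (hy : CycBtw m p y q)
    {k : Finset (Fin m)} (hcross : Cross m k {p, q}) (hne : k ≠ {x, y}) :
    ∃ s ∈ quadSides x p y q, Cross m k s := by
  obtain ⟨c, d, rfl, hcd⟩ := hcross.exists_eq_pair_lt p
  rw [cycBtw_iff p] at hx hy
  have := cycDist_self p; have := cycDist_lt p x
  have hyq : cycDist m p y < cycDist m p q := by omega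
  have hqx : cycDist m p q < cycDist m p x := by omega
  by_contra! h
  simp only [quadSides, Finset.mem_insert, Finset.mem_singleton, forall_eq_or_imp,
    forall_eq] at h
  obtain ⟨h₁, h₂, h₃, h₄⟩ := h
  rw [Finset.pair_comm x p, cross_pair_iff p hcd (by omega)] at h₁
  rw [cross_pair_iff p hcd (by omega)] at hcross h₂
  rw [cross_pair_iff p hcd hyq] at h₃
  rw [cross_pair_iff p hcd hqx] at h₄
  unfold Interleave at hcross h₁ h₂ h₃ h₄
  apply hne
  simp only [Finset.pair_eq_pair_iff, ← cycDist_inj (o := p)]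
  omega

theorem cross_diagonal_of_cross_quadSide {x p y q : Fin m} (hx : CycBtw m q x p)
    (hy : CycBtw m p y q) {s k : Finset (Fin m)} (hs : s ∈ quadSides x p y q)
    (hcross : Cross m k s) : Cross m k {x, y} ∨ Cross m k {p, q} := by
  obtain ⟨c, d, rfl, hcd⟩ := hcross.exists_eq_pair_lt p
  rw [cycBtw_iff p] at hx hy
  have := cycDist_self p; have := cycDist_lt p x; have := cycDist_lt p d
  have hyq : cycDist m p y < cycDist m p q := by omega
  have hqx : cycDist m p q < cycDist m p x := by omega
  rw [Finset.pair_comm x y, cross_pair_iff p hcd (by omega), cross_pair_iff p hcd (by omega)]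
  simp only [quadSides, Finset.mem_insert, Finset.mem_singleton] at hs
  rcases hs with rfl | rfl | rfl | rfl <;>
  first
  | rw [Finset.pair_comm x p, cross_pair_iff p hcd (by omega)] at hcross
  | rw [cross_pair_iff p hcd (by omega)] at hcross
  all_goals unfold Interleave at hcross ⊢; omega

theorem eq_of_cross_of_quadSides {T : Triangulation m} {x p y q : Fin m}
    (hx : CycBtw m q x p) (hy : CycBtw m p y q) (hsides : ∀ s ∈ quadSides x p y q, IsSide m T s)
    {k : Finset (Fin m)} (hk : k ∈ T.diagonals) (hcross : Cross m k {p, q}) : k = {x, y} := by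
  by_contra hne
  obtain ⟨s, hs, hks⟩ := exists_cross_quadSides hx hy hcross hne
  exact (hsides s hs).not_cross hk hks

theorem IsFlip.mem_iff {T T' : Triangulation m} {d d' g : Finset (Fin m)}
    (hf : IsFlip m T T' d d') : g ∈ T'.diagonals ↔ g = d' ∨ g ≠ d ∧ g ∈ T.diagonals := by
  rw [hf.2.2, Finset.mem_insert, Finset.mem_erase]

theorem IsFlip.mem_new {T T' : Triangulation m} {d d' : Finset (Fin m)}
    (hf : IsFlip m T T' d d') : d' ∈ T'.diagonals :=
  hf.mem_iff.2 (Or.inl rfl)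

theorem IsFlip.symm {T T' : Triangulation m} {d d' : Finset (Fin m)}
    (hf : IsFlip m T T' d d') : IsFlip m T' T d' d := by
  refine ⟨hf.mem_new, fun hd => ?_, ?_⟩
  · rcases hf.mem_iff.1 hd with h | h
    · exact hf.2.1 (h ▸ hf.1)
    · exact h.1 rfl
  · rw [hf.2.2, Finset.erase_insert fun h => hf.2.1 (Finset.mem_of_mem_erase h),
      Finset.insert_erase hf.1]

theorem IsFlip.cross {T T' : Triangulation m} {d d' : Finset (Fin m)}
    (hf : IsFlip m T T' d d') : Cross m d' d := by
  by_contra hd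
  refine hf.2.1 (T.maximal d' (T'.isDiagonal d' hf.mem_new) fun k hk hcross => ?_)
  by_cases hkd : k = d
  · exact hd (hkd ▸ hcross)
  · exact T'.noncross d' hf.mem_new k (hf.mem_iff.2 (Or.inr ⟨hkd, hk⟩)) hcross

def IsFlipOrEq (T T' : Triangulation m) : Prop :=
  T' = T ∨ ∃ g g', IsFlip m T T' g g'

/-- Every diagonal of `U` missing from `U'` crosses `g'` but no side of the quadrilateral around
`g'` in `U'`, so it is the opposite diagonal of that quadrilateral. -/
theorem Triangulation.eq_or_isFlip {U U' : Triangulation m} {g' : Finset (Fin m)}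
    (h : ∀ k ∈ U'.diagonals, k ≠ g' → k ∈ U.diagonals) :
    U' = U ∨ ∃ g, IsFlip m U U' g g' := by
  by_cases hsub : U'.diagonals ⊆ U.diagonals
  · exact Or.inl (Triangulation.eq_of_subset hsub)
  right
  have hg' : g' ∈ U'.diagonals ∧ g' ∉ U.diagonals := by
    obtain ⟨k, hk, hkU⟩ := Finset.not_subset.1 hsub
    obtain rfl : k = g' := by_contra fun hne => hkU (h k hk hne)
    exact ⟨hk, hkU⟩
  obtain ⟨p, q, -, -, rfl⟩ := U'.isDiagonal _ hg'.1
  obtain ⟨x, y, hx, hy, hsides⟩ := U'.exists_quad hg'.1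
  have hsidesU : ∀ s ∈ quadSides x p y q, IsSide m U s := fun s hs =>
    (hsides s hs).imp id fun hs' => h s hs' (quadSides_ne hx hy hs)
  have hout : ∀ k ∈ U.diagonals, k ∉ U'.diagonals → k = {x, y} := by
    intro k hk hk'
    obtain ⟨k', hk'U', hcross⟩ : ∃ k' ∈ U'.diagonals, Cross m k k' := by
      by_contra! hnc
      exact hk' (U'.maximal k (U.isDiagonal k hk) hnc)
    obtain rfl : k' = {p, q} :=
      by_contra fun hne => U.noncross k hk k' (h k' hk'U' hne) hcross
    exact eq_of_cross_of_quadSides hx hy hsidesU hk hcross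
  obtain ⟨k, hk, hcross⟩ : ∃ k ∈ U.diagonals, Cross m {p, q} k := by
    by_contra! hnc
    exact hg'.2 (U.maximal _ (U'.isDiagonal _ hg'.1) hnc)
  obtain rfl := hout k hk fun hk' => U'.noncross _ hg'.1 k hk' hcross
  refine ⟨{x, y}, hk, hg'.2, Finset.ext fun k => ?_⟩
  rw [Finset.mem_insert, Finset.mem_erase]
  constructor
  · intro hk'
    by_cases hkg : k = {p, q}
    · exact Or.inl hkg
    · exact Or.inr ⟨by rintro rfl; exact U'.noncross _ hg'.1 _ hk' hcross, h k hk' hkg⟩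
  · rintro (rfl | ⟨hne, hkU⟩)
    · exact hg'.1
    · exact by_contra fun hk' => hne (hout k hkU hk')

end Triangulations

section Fans

variable {m : ℕ} {a b z : Fin m} {g k : Finset (Fin m)}

theorem exists_cross_pair_of_cross (hgk : Cross m g k) (hag : a ∉ g) (hak : a ∉ k) :
    ∃ z ∈ k, Cross m g {a, z} := by
  obtain ⟨c, d, rfl, hcd⟩ := hgk.exists_eq_pair_lt a
  obtain ⟨v, w, rfl, hvw⟩ := hgk.symm.exists_eq_pair_lt a
  simp only [Finset.mem_insert, Finset.mem_singleton, not_or] at hag hak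
  have hc := cycDist_pos.2 (Ne.symm hag.1)
  have hv := cycDist_pos.2 (Ne.symm hak.1)
  have := cycDist_self a
  rw [cross_pair_iff a hcd hvw] at hgk
  unfold Interleave at hgk
  rcases hgk with h | h
  · exact ⟨v, by simp, by rw [cross_pair_iff a hcd (by omega)]; unfold Interleave; omega⟩
  · exact ⟨w, by simp, by rw [cross_pair_iff a hcd (by omega)]; unfold Interleave; omega⟩

theorem cross_of_cross_fan (hk : Cross m k {a, b}) (hz : z ∈ k) (hgk : ¬ Cross m g k)
    (hg : Cross m g {a, z}) : Cross m g {a, b} := by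
  obtain ⟨v, w, rfl, hvw⟩ := hk.exists_eq_pair_lt a
  obtain ⟨c, d, rfl, hcd⟩ := hg.exists_eq_pair_lt a
  have := cycDist_self a; have := cycDist_lt a w
  have hb : 0 < cycDist m a b := cycDist_pos.2 fun hba => by
    rw [hba] at hk; exact not_cross_pair_self _ a hk
  rw [cross_pair_iff a hvw (by omega)] at hk
  rw [cross_pair_iff a hcd hvw] at hgk
  rw [cross_pair_iff a hcd (by omega)]
  unfold Interleave at hk hgk ⊢
  simp only [Finset.mem_insert, Finset.mem_singleton] at hz
  rcases hz with rfl | rfl <;> rw [cross_pair_iff a hcd (by omega)] at hg <;>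
    unfold Interleave at hg <;> omega

end Fans

section Projection

variable {m : ℕ} {a b : Fin m} {T T' : Triangulation m} {d d' g : Finset (Fin m)}

/-- The diagonals of the projection of `T` towards `{a, b}`: besides `{a, b}`, these are the
diagonals of `T` not crossing `{a, b}` and the fan at `a` that re-triangulates the region swept by
the diagonals of `T` crossing `{a, b}`. -/
structure ProjDiag (a b : Fin m) (T : Triangulation m) (g : Finset (Fin m)) : Prop where
  isDiagonal : IsDiagonal m g
  not_cross_pair : ¬ Cross m g {a, b}
  cross_imp : ∀ k ∈ T.diagonals, Cross m g k → a ∈ g ∧ Cross m k {a, b}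

theorem projDiag_of_mem {k : Finset (Fin m)} (hk : k ∈ T.diagonals) (hke : ¬ Cross m k {a, b}) :
    ProjDiag a b T k :=
  ⟨T.isDiagonal k hk, hke, fun k' hk' hcross => absurd hcross (T.noncross k hk k' hk')⟩

theorem projDiag_pair (hab : IsDiagonal m {a, b}) : ProjDiag a b T {a, b} :=
  ⟨hab, not_cross_of_mem (Finset.mem_insert_self a _) (Finset.mem_insert_self a _),
    fun _ _ hcross => ⟨Finset.mem_insert_self a _, hcross.symm⟩⟩

theorem projDiag_fan {k : Finset (Fin m)} {z : Fin m} (hk : k ∈ T.diagonals)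
    (hke : Cross m k {a, b}) (hz : z ∈ k) (hadj : ¬ PolyAdj m a z) : ProjDiag a b T {a, z} := by
  have haz : a ≠ z := by
    rintro rfl; exact not_cross_of_mem hz (Finset.mem_insert_self a _) hke
  refine ⟨isDiagonal_pair_iff.2 ⟨haz, hadj⟩,
    not_cross_of_mem (Finset.mem_insert_self a _) (Finset.mem_insert_self a _),
    fun k' hk' hcross => ⟨Finset.mem_insert_self a _, ?_⟩⟩
  exact cross_of_cross_fan hke hz (T.noncross k' hk' k hk) hcross.symm

theorem ProjDiag.mem_of_not_mem (hg : ProjDiag a b T g) (ha : a ∉ g) : g ∈ T.diagonals :=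
  T.maximal g hg.isDiagonal fun k hk hcross => ha (hg.cross_imp k hk hcross).1

theorem ProjDiag.not_cross {h : Finset (Fin m)} (hg : ProjDiag a b T g) (hh : ProjDiag a b T h) :
    ¬ Cross m g h := by
  by_cases hag : a ∈ g
  · by_cases hah : a ∈ h
    · exact not_cross_of_mem hag hah
    · exact fun hcross => hh.not_cross_pair (hg.cross_imp h (hh.mem_of_not_mem hah) hcross).2
  · exact fun hcross => hg.not_cross_pair (hh.cross_imp g (hg.mem_of_not_mem hag) hcross.symm).2

theorem projDiag_of_forall_not_cross (hab : IsDiagonal m {a, b}) (hg : IsDiagonal m g)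
    (h : ∀ g', ProjDiag a b T g' → ¬ Cross m g g') : ProjDiag a b T g := by
  refine ⟨hg, h _ (projDiag_pair hab), fun k hk hcross => ?_⟩
  have hke : Cross m k {a, b} := by_contra fun hke => h k (projDiag_of_mem hk hke) hcross
  refine ⟨by_contra fun ha => ?_, hke⟩
  have hak : a ∉ k := fun ha' => not_cross_of_mem ha' (Finset.mem_insert_self a _) hke
  obtain ⟨z, hz, hgz⟩ := exists_cross_pair_of_cross hcross ha hak
  exact h _ (projDiag_fan hk hke hz fun hadj => not_cross_of_polyAdj hadj g hgz) hgz

open scoped Classical in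
noncomputable def Triangulation.project (hab : IsDiagonal m {a, b}) (T : Triangulation m) :
    Triangulation m where
  diagonals := Finset.univ.filter (ProjDiag a b T)
  isDiagonal _ hg := (Finset.mem_filter.1 hg).2.isDiagonal
  noncross _ hg _ hh := (Finset.mem_filter.1 hg).2.not_cross (Finset.mem_filter.1 hh).2
  maximal _ hg h := Finset.mem_filter.2 ⟨Finset.mem_univ _, projDiag_of_forall_not_cross hab hg
    fun g' hg' => h g' (Finset.mem_filter.2 ⟨Finset.mem_univ _, hg'⟩)⟩

@[simp]
theorem Triangulation.mem_project {hab : IsDiagonal m {a, b}} :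
    g ∈ (T.project hab).diagonals ↔ ProjDiag a b T g := by
  simp [Triangulation.project]

theorem Triangulation.project_eq_self (hab : IsDiagonal m {a, b}) (he : {a, b} ∈ T.diagonals) :
    T.project hab = T :=
  (Triangulation.eq_of_subset fun k hk =>
    mem_project.2 (projDiag_of_mem hk (T.noncross k hk _ he))).symm

/-- Not being the opposite diagonal `d`, a `g` crossing `d'` would cross a side of the quadrilateral
of the flip, and a side crosses `{a, b}` only if `d` or `d'` does. -/
theorem ProjDiag.not_cross_of_isFlip (hg : ProjDiag a b T g) (hf : IsFlip m T T' d d')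
    (hd : ¬ Cross m d {a, b}) (hd' : ¬ Cross m d' {a, b}) (hgd : g ≠ d) : ¬ Cross m g d' := by
  intro hcross
  obtain ⟨p, q, -, -, rfl⟩ := T'.isDiagonal _ hf.mem_new
  obtain ⟨x, y, hx, hy, hsides⟩ := T'.exists_quad hf.mem_new
  have hsidesT : ∀ s ∈ quadSides x p y q, IsSide m T s := fun s hs =>
    (hsides s hs).imp id fun hs' => ((hf.mem_iff.1 hs').resolve_left (quadSides_ne hx hy hs)).2
  have hdxy : d = {x, y} := eq_of_cross_of_quadSides hx hy hsidesT hf.1 hf.cross.symm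
  obtain ⟨s, hs, hgs⟩ := exists_cross_quadSides hx hy hcross (hdxy ▸ hgd)
  have hsT : s ∈ T.diagonals := (hsidesT s hs).resolve_left
    fun ⟨_, _, huv, hs'⟩ => not_cross_of_polyAdj huv g (hs' ▸ hgs)
  rcases cross_diagonal_of_cross_quadSide hx hy hs (hg.cross_imp s hsT hgs).2.symm with h | h
  · exact hd (hdxy ▸ h.symm)
  · exact hd' h.symm

theorem ProjDiag.of_isFlip (hg : ProjDiag a b T g) (hf : IsFlip m T T' d d')
    (hd : Cross m d' {a, b} ∨ ¬ Cross m d {a, b}) (hgd : g ≠ d) : ProjDiag a b T' g := by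
  refine ⟨hg.isDiagonal, hg.not_cross_pair, fun k hk hcross => ?_⟩
  rcases hf.mem_iff.1 hk with rfl | ⟨-, hkT⟩
  · by_cases hke : Cross m k {a, b}
    · refine ⟨by_contra fun ha => ?_, hke⟩
      exact T'.noncross g (hf.mem_iff.2 (Or.inr ⟨hgd, hg.mem_of_not_mem ha⟩)) k hk hcross
    · exact absurd hcross (hg.not_cross_of_isFlip hf (hd.resolve_left hke) hke hgd)
  · exact hg.cross_imp k hkT hcross

theorem Triangulation.project_eq_or_isFlip_of_isFlip (hab : IsDiagonal m {a, b})
    (hf : IsFlip m T T' d d') (hd : Cross m d' {a, b} ∨ ¬ Cross m d {a, b}) :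
    T.project hab = T'.project hab ∨ ∃ g, IsFlip m (T'.project hab) (T.project hab) g d :=
  Triangulation.eq_or_isFlip fun _ hk hkd => mem_project.2 ((mem_project.1 hk).of_isFlip hf hd hkd)

theorem Triangulation.project_isFlipOrEq (hab : IsDiagonal m {a, b}) (hf : IsFlip m T T' d d') :
    IsFlipOrEq (T.project hab) (T'.project hab) := by
  by_cases h : Cross m d {a, b} ∧ ¬ Cross m d' {a, b}
  · rcases project_eq_or_isFlip_of_isFlip hab hf.symm (Or.inl h.1) with heq | ⟨g, hg⟩
    · exact Or.inl heq
    · exact Or.inr ⟨g, d', hg⟩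
  · rcases project_eq_or_isFlip_of_isFlip hab hf (by tauto) with heq | ⟨g, hg⟩
    · exact Or.inl heq.symm
    · exact Or.inr ⟨d, g, hg.symm⟩

theorem Triangulation.project_eq_of_isFlip_pair (hab : IsDiagonal m {a, b})
    (hf : IsFlip m T T' {a, b} d') : T'.project hab = T.project hab := by
  refine (Triangulation.eq_of_subset fun k hk => mem_project.2 ?_).symm
  by_cases hke : k = {a, b}
  · exact hke ▸ projDiag_pair hab
  · exact (mem_project.1 hk).of_isFlip hf
      (Or.inr (not_cross_of_mem (Finset.mem_insert_self a _) (Finset.mem_insert_self a _))) hke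

end Projection

section FlipSequences

variable {m : ℕ}

theorem exists_flipSeq_of_isFlipOrEq {Q : ℕ → Triangulation m} {r : ℕ}
    (hQ : ∀ i < r, IsFlipOrEq (Q i) (Q (i + 1))) :
    ∃ k ≤ r, ∃ F Ts, IsFlipSeq m k F Ts ∧ Ts 0 = Q 0 ∧ Ts k = Q r := by
  induction r with
  | zero => exact ⟨0, le_rfl, fun _ => (∅, ∅), fun _ => Q 0, fun _ hi => absurd hi (by omega),
      rfl, rfl⟩
  | succ r ih =>
    obtain ⟨k, hk, F, Ts, hseq, h0, hr⟩ := ih fun i hi => hQ i (by omega)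
    rcases hQ r (by omega) with heq | ⟨g, g', hf⟩
    · exact ⟨k, by omega, F, Ts, hseq, h0, by rw [hr, heq]⟩
    refine ⟨k + 1, by omega, Function.update F k (g, g'), Function.update Ts (k + 1) (Q (r + 1)),
      fun i hi => ?_, by simp [h0], by simp⟩
    rcases (by omega : i < k ∨ i = k) with hi | rfl
    · simpa [Function.update_of_ne (show i ≠ k by omega),
        Function.update_of_ne (show i ≠ k + 1 by omega),
        Function.update_of_ne (show i + 1 ≠ k + 1 by omega)] using hseq i hi
    · simpa [Function.update_of_ne (show i ≠ i + 1 by omega), hr] using hf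

theorem flipDist_le_of_isFlipOrEq {Q : ℕ → Triangulation m} {r : ℕ}
    (hQ : ∀ i < r, IsFlipOrEq (Q i) (Q (i + 1))) : FlipDist m (Q 0) (Q r) ≤ r := by
  obtain ⟨k, hk, F, Ts, hseq, h0, hr⟩ := exists_flipSeq_of_isFlipOrEq hQ
  exact (Nat.sInf_le (show k ∈ {n | ∃ F Ts, IsFlipSeq m n F Ts ∧ Ts 0 = Q 0 ∧ Ts n = Q r} from
    ⟨F, Ts, hseq, h0, hr⟩)).trans hk

theorem flipDist_lt_of_isFlipOrEq {Q : ℕ → Triangulation m} {r i : ℕ}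
    (hQ : ∀ i < r, IsFlipOrEq (Q i) (Q (i + 1))) (hi : i < r) (hstay : Q (i + 1) = Q i) :
    FlipDist m (Q 0) (Q r) < r := by
  obtain ⟨n, rfl⟩ : ∃ n, r = n + 1 := ⟨r - 1, by omega⟩
  -- the sequence with the stay at step `i` cut out
  let Q' : ℕ → Triangulation m := fun j => if j ≤ i then Q j else Q (j + 1)
  have hsteps : ∀ j < n, IsFlipOrEq (Q' j) (Q' (j + 1)) := by
    intro j hj
    rcases lt_trichotomy j i with hji | rfl | hji
    · simpa [Q', hji.le, Nat.succ_le_of_lt hji] using hQ j (by omega)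
    · simpa [Q', hstay] using hQ (j + 1) (by omega)
    · simpa [Q', hji.not_ge, show ¬ j + 1 ≤ i by omega] using hQ (j + 1) (by omega)
  have hQ'n : Q' n = Q (n + 1) := by
    by_cases hn : n ≤ i
    · simp only [Q', if_pos hn]; rw [show n = i by omega, hstay]
    · simp only [Q', if_neg hn]
  have := flipDist_le_of_isFlipOrEq hsteps
  rw [hQ'n, show Q' 0 = Q 0 from if_pos (Nat.zero_le i)] at this
  omega

theorem IsFlipSeq.mem_of_forall_ne {r : ℕ} {F : ℕ → Finset (Fin m) × Finset (Fin m)}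
    {Ts : ℕ → Triangulation m} {e : Finset (Fin m)} (hseq : IsFlipSeq m r F Ts)
    (he : e ∈ (Ts 0).diagonals) (hne : ∀ i < r, (F i).1 ≠ e) : ∀ i ≤ r, e ∈ (Ts i).diagonals := by
  intro i hi
  induction i with
  | zero => exact he
  | succ i ih =>
    exact (hseq i (by omega)).mem_iff.2 (Or.inr ⟨fun h => hne i (by omega) h.symm, ih (by omega)⟩)

end FlipSequences

theorem common_diagonal_never_flipped_general (m : ℕ)
    (Tinit Tfinal : Triangulation m) (e : Finset (Fin m))
    (heI : e ∈ Tinit.diagonals) (heF : e ∈ Tfinal.diagonals)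
    (r : ℕ) (F : ℕ → Finset (Fin m) × Finset (Fin m)) (Ts : ℕ → Triangulation m)
    (hseq : IsFlipSeq m r F Ts) (h0 : Ts 0 = Tinit) (hr : Ts r = Tfinal)
    (hmin : r = FlipDist m Tinit Tfinal) :
    (∀ i < r, (F i).1 ≠ e) ∧ (∀ i ≤ r, e ∈ (Ts i).diagonals) := by
  obtain ⟨a, b, -, -, rfl⟩ := Tinit.isDiagonal e heI
  have hab := Tinit.isDiagonal _ heI
  have hnever : ∀ i < r, (F i).1 ≠ {a, b} := by
    intro i hi hflip
    -- projecting towards `{a, b}` keeps the endpoints and turns flip `i` into a non-move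
    have hlt := flipDist_lt_of_isFlipOrEq (Q := fun j => (Ts j).project hab)
      (fun j hj => (Ts j).project_isFlipOrEq hab (hseq j hj)) hi
      ((Ts i).project_eq_of_isFlip_pair hab (hflip ▸ hseq i hi))
    simp only [h0, hr, Tinit.project_eq_self hab heI, Tfinal.project_eq_self hab heF] at hlt
    omega
  exact ⟨hnever, hseq.mem_of_forall_ne (h0 ▸ heI) hnever⟩

/-- Let `Tinit` and `Tfinal` be triangulations of the same convex polygon
sharing a diagonal `e`. Then every flip sequence of minimum length transforming
`Tinit` into `Tfinal` contains no flip whose underlying (removed) diagonal is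
`e`; consequently `e` is a diagonal of every intermediate triangulation along
every shortest path from `Tinit` to `Tfinal`. -/
theorem common_diagonal_never_flipped (m : ℕ) (hm : 3 ≤ m)
    (Tinit Tfinal : Triangulation m) (e : Finset (Fin m))
    (heI : e ∈ Tinit.diagonals) (heF : e ∈ Tfinal.diagonals)
    (r : ℕ) (F : ℕ → Finset (Fin m) × Finset (Fin m)) (Ts : ℕ → Triangulation m)
    (hseq : IsFlipSeq m r F Ts) (h0 : Ts 0 = Tinit) (hr : Ts r = Tfinal)
    (hmin : r = FlipDist m Tinit Tfinal) :
    (∀ i < r, (F i).1 ≠ e) ∧ (∀ i ≤ r, e ∈ (Ts i).diagonals) :=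
  common_diagonal_never_flipped_general m Tinit Tfinal e heI heF r F Ts hseq h0 hr hmin
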